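/- Let 𝔤 be the 6-dimensional Lie algebra with brackets [e₁,u₁]=u₃, [e₁,u₂]=½u₄, [e₁,u₃]=-u₁, [e₁,u₄]=-½u₂, [u₁,u₂]=u₂, [u₁,u₃]=-4e₁, [u₁,u₄]=-u₄, [u₂,u₃]=-u₄, [u₃,u₄]=u₂, u₅ central, and let 𝔪 = span{u₁,u₂,u₃,u₄,u₅} with B = diag(1,1,1,1,-1) on 𝔪 (with respect to u₁,...,u₅). Then U = u₂ + (1/√2)u₃ + √(3/2)u₅ + √2 e₁ satisfies B(U_𝔪, U_𝔪) = 0 and B(U_𝔪, [Z,U]_𝔪) = 0 for all Z ∈ 𝔤; i.e. U is a null absolutely geodesic vector. -/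

import Mathlib

/-- The bracket of the 6-dimensional Lie algebra (Komrakov 1.1².11 extended by a
central element u₅) on ℝ⁶ with basis (e₁,u₁,u₂,u₃,u₄,u₅) = (coords 0,…,5). -/
noncomputable def brK6 (x y : Fin 6 → ℝ) : Fin 6 → ℝ :=
  ![-4 * (x 1 * y 3 - x 3 * y 1),
    -(x 0 * y 3 - x 3 * y 0),
    -(1/2) * (x 0 * y 4 - x 4 * y 0) + (x 1 * y 2 - x 2 * y 1) + (x 3 * y 4 - x 4 * y 3),
    (x 0 * y 1 - x 1 * y 0),
    (1/2) * (x 0 * y 2 - x 2 * y 0) - (x 1 * y 4 - x 4 * y 1) - (x 2 * y 3 - x 3 * y 2),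
    0]

/-- The form B = diag(1,1,1,1,-1) on 𝔪 = span{u₁,…,u₅}, applied to the
𝔪-components (coordinates 1,…,5) of elements of 𝔤. -/
def BK6 (x y : Fin 6 → ℝ) : ℝ :=
  x 1 * y 1 + x 2 * y 2 + x 3 * y 3 + x 4 * y 4 - x 5 * y 5

/-- The vector U = u₂ + (1/√2)u₃ + √(3/2)u₅ + √2 e₁. -/
noncomputable def UK6 : Fin 6 → ℝ :=
  ![Real.sqrt 2, 0, 1, 1 / Real.sqrt 2, 0, Real.sqrt (3/2)]

/-!
Only the u₂- and u₃-components of `[Z, U]` meet `U_𝔪` under `B`, and both are multiples of the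
u₁-coordinate `z` of `Z`: the u₄-contributions `½√2 z₄ u₂` (from `[u₄, e₁]`) and `-(1/√2) z₄ u₂`
(from `[u₄, u₃]`) cancel, so `[Z, U]` has u₂-component `z` and u₃-component `-√2 z`, and these
pair with `U_𝔪` to `z - √2 z / √2 = 0`. Nullity is `1 + 1/2 - 3/2 = 0`.
-/

open Real

theorem brK6_apply_five (x y : Fin 6 → ℝ) : brK6 x y 5 = 0 := rfl

theorem brK6_UK6_apply_two (Z : Fin 6 → ℝ) : brK6 Z UK6 2 = Z 1 := by
  have h : (1 / 2 : ℝ) * √2 = 1 / √2 := by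
    field_simp
    rw [sq_sqrt zero_le_two]
  simp only [brK6, UK6, Matrix.cons_val]
  linear_combination Z 4 * h

theorem brK6_UK6_apply_three (Z : Fin 6 → ℝ) : brK6 Z UK6 3 = -(√2 * Z 1) := by
  simp only [brK6, UK6, Matrix.cons_val]
  ring

theorem BK6_UK6_left (W : Fin 6 → ℝ) :
    BK6 UK6 W = W 2 + W 3 / √2 - √(3/2) * W 5 := by
  simp only [BK6, UK6, Matrix.cons_val]
  ring

theorem BK6_UK6_self : BK6 UK6 UK6 = 0 := by
  rw [BK6_UK6_left]
  simp only [UK6, Matrix.cons_val]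
  rw [div_div, mul_self_sqrt zero_le_two, ← pow_two, sq_sqrt (by norm_num)]
  norm_num

/-- U is a null absolutely geodesic vector: B(U_𝔪,U_𝔪) = 0 and
B(U_𝔪, [Z,U]_𝔪) = 0 for all Z ∈ 𝔤. -/
theorem stmt16 :
    BK6 UK6 UK6 = 0 ∧ ∀ Z : Fin 6 → ℝ, BK6 UK6 (brK6 Z UK6) = 0 := by
  refine ⟨BK6_UK6_self, fun Z => ?_⟩
  rw [BK6_UK6_left, brK6_UK6_apply_two, brK6_UK6_apply_three, brK6_apply_five]
  field_simp
  ring
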